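/- Let {X_t}_{t≥0}, {Y_t}_{t≥0} be two copies of the parallel Kac's walk on the complex unit sphere of ℂ^n (n = 2m) coupled via the complex proportional coupling, and define A_t[i] = |X_t[i]|², B_t[i] = |Y_t[i]|². Then for any ℓ ∈ ℕ, E[Σ_{i=1}^n (A_ℓ[i] − B_ℓ[i])²] ≤ 2·(2/3)^ℓ. -/

import Mathlib

open MeasureTheory

/-- A perfect matching of `Fin n`, encoded as a fixed-point-free involution. -/
def PerfectMatching (n : ℕ) : Type :=
  {σ : Equiv.Perm (Fin n) // (∀ i, σ (σ i) = i) ∧ ∀ i, σ i ≠ i}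

instance (n : ℕ) : Fintype (PerfectMatching n) := by
  unfold PerfectMatching; infer_instance

instance (n : ℕ) : MeasurableSpace (PerfectMatching n) := ⊤

instance (n : ℕ) : MeasurableSingletonClass (PerfectMatching n) := ⟨fun _ => trivial⟩

/-- The uniform distribution on perfect matchings of `Fin n`. -/
noncomputable def uniformPM (n : ℕ) (h : Nonempty (PerfectMatching n)) :
    Measure (PerfectMatching n) :=
  (@PMF.uniformOfFintype (PerfectMatching n) _ h).toMeasure

/-- The uniform probability measure on the angle interval `[0, 2π)`. -/
noncomputable def uniformAngle : Measure ℝ :=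
  (ENNReal.ofReal (2 * Real.pi))⁻¹ • (volume.restrict (Set.Ico 0 (2 * Real.pi)))

/-- The uniform probability measure on `[0, 1)`. -/
noncomputable def uniform01 : Measure ℝ := volume.restrict (Set.Ico 0 1)

instance : IsProbabilityMeasure uniformAngle := by
  constructor
  have h2pi : (0:ℝ) < 2 * Real.pi := by positivity
  simp only [uniformAngle, Measure.smul_apply, Measure.restrict_apply MeasurableSet.univ,
    Set.univ_inter, Real.volume_Ico, sub_zero, smul_eq_mul]
  rw [ENNReal.inv_mul_cancel (by simp [ENNReal.ofReal_eq_zero, not_le, h2pi, Real.pi_pos]) ENNReal.ofReal_ne_top]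

instance : IsProbabilityMeasure uniform01 := by
  constructor
  simp [uniform01, Measure.restrict_apply MeasurableSet.univ]

instance (n : ℕ) (h : Nonempty (PerfectMatching n)) : IsProbabilityMeasure (uniformPM n h) := by
  unfold uniformPM; infer_instance

/-- Conjugating a perfect matching by a swap. -/
def pmConj {n : ℕ} (a b : Fin n) (σ : PerfectMatching n) : PerfectMatching n :=
  ⟨Equiv.swap a b * σ.1 * Equiv.swap a b,
    fun x => by
      simp only [Equiv.Perm.mul_apply, Equiv.swap_apply_self, σ.2.1],
    fun x hx => by
      simp only [Equiv.Perm.mul_apply] at hx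
      have h2 := congrArg (Equiv.swap a b) hx
      rw [Equiv.swap_apply_self] at h2
      exact σ.2.2 _ h2⟩

lemma pmConj_pmConj {n : ℕ} (a b : Fin n) (σ : PerfectMatching n) :
    pmConj a b (pmConj a b σ) = σ := by
  apply Subtype.ext
  ext x
  simp only [pmConj, Equiv.Perm.mul_apply, Equiv.swap_apply_self]

lemma pm_card_fiber_eq {n : ℕ} (i j j' : Fin n) (hj : j ≠ i) (hj' : j' ≠ i) :
    (Finset.univ.filter fun σ : PerfectMatching n => σ.1 i = j).card
      = (Finset.univ.filter fun σ : PerfectMatching n => σ.1 i = j').card := by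
  classical
  rcases eq_or_ne j j' with rfl | hjj'
  · rfl
  have hτi : Equiv.swap j j' i = i := Equiv.swap_apply_of_ne_of_ne (Ne.symm hj) (Ne.symm hj')
  have happ : ∀ σ : PerfectMatching n, (pmConj j j' σ).1 i = Equiv.swap j j' (σ.1 i) := by
    intro σ
    simp only [pmConj, Equiv.Perm.mul_apply, hτi]
  refine Finset.card_bij' (fun σ _ => pmConj j j' σ) (fun σ _ => pmConj j j' σ) ?_ ?_ ?_ ?_
  · intro σ hσ
    simp only [Finset.mem_filter, Finset.mem_univ, true_and] at hσ ⊢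
    rw [happ, hσ, Equiv.swap_apply_left]
  · intro σ hσ
    simp only [Finset.mem_filter, Finset.mem_univ, true_and] at hσ ⊢
    rw [happ, hσ, Equiv.swap_apply_right]
  · intro σ _; exact pmConj_pmConj _ _ _
  · intro σ _; exact pmConj_pmConj _ _ _

/-- The matching-averaged cross term is nonpositive. -/
lemma pm_sum_cross_nonpos {n : ℕ} (h : Nonempty (PerfectMatching n)) (D : Fin n → ℝ)
    (hD : ∑ i, D i = 0) :
    ∑ σ : PerfectMatching n, ∑ i, D i * D (σ.1 i) ≤ 0 := by
  classical
  rw [Finset.sum_comm]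
  apply Finset.sum_nonpos
  intro i _
  obtain ⟨σ₀⟩ := h
  set j₀ := σ₀.1 i with hj₀def
  have hj₀ : j₀ ≠ i := σ₀.2.2 i
  set c : Fin n → ℕ := fun j => (Finset.univ.filter fun σ : PerfectMatching n => σ.1 i = j).card
    with hc
  have hci : c i = 0 := by
    rw [hc]
    simp only [Finset.card_eq_zero, Finset.filter_eq_empty_iff]
    intro σ _
    exact σ.2.2 i
  have hcj : ∀ j, j ≠ i → c j = c j₀ := fun j hjne => pm_card_fiber_eq i j j₀ hjne hj₀
  have key : ∑ σ : PerfectMatching n, D i * D (σ.1 i)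
      = ∑ j, (c j : ℝ) * (D i * D j) := by
    have hf := Finset.sum_fiberwise_eq_sum_filter' Finset.univ Finset.univ
      (fun σ : PerfectMatching n => σ.1 i) (fun j => D i * D j)
    simp only [Finset.mem_univ, Finset.filter_true] at hf
    rw [← hf]
    refine Finset.sum_congr rfl fun j _ => ?_
    rw [Finset.sum_const, nsmul_eq_mul]
  rw [key]
  have split : ∀ j : Fin n, (c j : ℝ) * (D i * D j)
      = (c j₀ : ℝ) * (D i * D j) + ((c j : ℝ) - (c j₀ : ℝ)) * (D i * D j) := by
    intro j; ring
  rw [Finset.sum_congr rfl fun j _ => split j, Finset.sum_add_distrib]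
  have h1 : ∑ j, (c j₀ : ℝ) * (D i * D j) = 0 := by
    rw [← Finset.mul_sum, ← Finset.mul_sum, hD]; ring
  have h2 : ∑ j, ((c j : ℝ) - (c j₀ : ℝ)) * (D i * D j) = -(c j₀ : ℝ) * (D i * D i) := by
    rw [Finset.sum_eq_single i]
    · rw [hci]; push_cast; ring
    · intro j _ hji
      rw [hcj j hji]; ring
    · intro hi; exact absurd (Finset.mem_univ i) hi
  rw [h1, h2]
  have : (0:ℝ) ≤ (c j₀ : ℝ) * (D i * D i) := mul_nonneg (Nat.cast_nonneg _) (mul_self_nonneg _)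
  linarith

/-- Random seed for one step of the coupled complex parallel Kac's walk: a perfect matching and,
for each pair (read off at the smaller index), phases `α, β ~ Unif[0,2π)` and `ζ ~ Unif[0,1)`
(with `θ = arcsin √ζ`) parameterizing a Haar-random `SU(2)` matrix. -/
abbrev CKacSeed (n : ℕ) : Type :=
  PerfectMatching n × (Fin n → ℝ) × (Fin n → ℝ) × (Fin n → ℝ)

/-- The distribution of one seed. -/
noncomputable def cKacSeedMeasure (n : ℕ) (h : Nonempty (PerfectMatching n)) :
    Measure (CKacSeed n) :=
  (uniformPM n h).prod
    ((Measure.pi fun _ : Fin n => uniformAngle).prod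
      ((Measure.pi fun _ : Fin n => uniformAngle).prod
        (Measure.pi fun _ : Fin n => uniform01)))

/-- One step of the (coupled) complex parallel Kac's walk applied to a vector `v ∈ ℂ^n`:
each matched pair `(i, j)` with `i < j` and length `l = √(|v i|² + |v j|²)` is first rotated
to `(l, 0)` by a suitable `SU(2)` matrix and then multiplied by the Haar-random `SU(2)` matrix
`U(α, β, θ)`, producing the pair `(e^{iα} cos θ · l, e^{-iβ} sin θ · l)`.  Applying this map with
the *same* seed to both chains is exactly the complex proportional coupling. -/
noncomputable def cKacStep {n : ℕ} (s : CKacSeed n) (v : Fin n → ℂ) : Fin n → ℂ :=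
  fun i =>
    let σ := s.1.1
    let α := s.2.1
    let β := s.2.2.1
    let ζ := s.2.2.2
    let i0 := min i (σ i)
    let l : ℝ := Real.sqrt (Complex.normSq (v i0) + Complex.normSq (v (σ i0)))
    let θ : ℝ := Real.arcsin (Real.sqrt (ζ i0))
    if i ≤ σ i then Complex.exp (α i0 * Complex.I) * Real.cos θ * l
    else Complex.exp (-β i0 * Complex.I) * Real.sin θ * l

/-- The coupled chain `X_ℓ` obtained by running `ℓ` coupled steps with the given seeds. -/
noncomputable def cKacWalk {n : ℕ} {ℓ : ℕ} (s : Fin ℓ → CKacSeed n) (x0 : Fin n → ℂ) :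
    Fin n → ℂ :=
  (List.ofFn s).foldl (fun v seed => cKacStep seed v) x0

/-- cos²(arcsin √t) -/
noncomputable def qc (t : ℝ) : ℝ := (Real.cos (Real.arcsin (Real.sqrt t)))^2
/-- sin²(arcsin √t) -/
noncomputable def qs (t : ℝ) : ℝ := (Real.sin (Real.arcsin (Real.sqrt t)))^2

lemma qc_add_qs (t : ℝ) : qc t + qs t = 1 := by
  rw [qc, qs, add_comm]; exact Real.sin_sq_add_cos_sq _

lemma qc_nonneg (t : ℝ) : 0 ≤ qc t := sq_nonneg _
lemma qs_nonneg (t : ℝ) : 0 ≤ qs t := sq_nonneg _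
lemma qc_le_one (t : ℝ) : qc t ≤ 1 := by
  rw [qc]; nlinarith [Real.neg_one_le_cos (Real.arcsin (Real.sqrt t)),
    Real.cos_le_one (Real.arcsin (Real.sqrt t))]
lemma qs_le_one (t : ℝ) : qs t ≤ 1 := by
  have := qc_add_qs t; have := qc_nonneg t; linarith

lemma continuous_qc : Continuous qc := by
  exact ((Real.continuous_cos.comp (Real.continuous_arcsin.comp Real.continuous_sqrt)).pow 2)
lemma continuous_qs : Continuous qs := by
  exact ((Real.continuous_sin.comp (Real.continuous_arcsin.comp Real.continuous_sqrt)).pow 2)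

/-- The normSq of one coordinate after one step. -/
lemma normSq_cKacStep {n : ℕ} (s : CKacSeed n) (v : Fin n → ℂ) (i : Fin n) :
    Complex.normSq (cKacStep s v i)
      = (if i ≤ s.1.1 i then qc (s.2.2.2 (min i (s.1.1 i))) else qs (s.2.2.2 (min i (s.1.1 i))))
        * (Complex.normSq (v i) + Complex.normSq (v (s.1.1 i))) := by
  obtain ⟨σ, α, β, ζ⟩ := s
  simp only [cKacStep]
  have habs : ∀ x : ℝ, Complex.normSq (Complex.exp (↑x * Complex.I)) = 1 := by
    intro x
    rw [Complex.normSq_eq_norm_sq, Complex.norm_exp]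
    simp
  have hnn : ∀ j k : Fin n, 0 ≤ Complex.normSq (v j) + Complex.normSq (v k) :=
    fun j k => add_nonneg (Complex.normSq_nonneg _) (Complex.normSq_nonneg _)
  by_cases hle : i ≤ σ.1 i
  · have hmin : min i (σ.1 i) = i := min_eq_left hle
    simp only [hle, if_true, hmin]
    rw [Complex.normSq_mul, Complex.normSq_mul, habs, Complex.normSq_ofReal,
      Complex.normSq_ofReal, Real.mul_self_sqrt (hnn i (σ.1 i))]
    rw [qc]
    ring
  · have hlt : σ.1 i < i := lt_of_le_of_ne (le_of_not_ge hle) (σ.2.2 i)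
    have hmin : min i (σ.1 i) = σ.1 i := min_eq_right hlt.le
    simp only [hle, if_false, hmin, σ.2.1 i]
    have : (-(β (σ.1 i)) : ℂ) = ((-(β (σ.1 i)) : ℝ) : ℂ) := by push_cast; ring
    rw [Complex.normSq_mul, Complex.normSq_mul, this, habs, Complex.normSq_ofReal,
      Complex.normSq_ofReal, Real.mul_self_sqrt (hnn (σ.1 i) i)]
    rw [qs]
    ring

/-- One step preserves the total norm. -/
lemma sum_normSq_cKacStep {n : ℕ} (s : CKacSeed n) (v : Fin n → ℂ) :
    ∑ i, Complex.normSq (cKacStep s v i) = ∑ i, Complex.normSq (v i) := by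
  obtain ⟨σ, abz⟩ := s
  set f : Fin n → ℝ := fun i => Complex.normSq (cKacStep (σ, abz) v i) with hf
  have hsum2 : ∑ i, f (σ.1 i) = ∑ i, f i := Equiv.sum_comp σ.1 f
  have hpair : ∀ i : Fin n, f i + f (σ.1 i)
      = (Complex.normSq (v i) + Complex.normSq (v (σ.1 i)))
        + (Complex.normSq (v (σ.1 i)) + Complex.normSq (v i)) - 
          (Complex.normSq (v i) + Complex.normSq (v (σ.1 i))) := by
    intro i
    simp only [hf]
    rw [normSq_cKacStep, normSq_cKacStep]
    simp only [σ.2.1 i]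
    have hne := σ.2.2 i
    have hmin : min (σ.1 i) i = min i (σ.1 i) := min_comm _ _
    by_cases hle : i ≤ σ.1 i
    · have hlt : i < σ.1 i := lt_of_le_of_ne hle (Ne.symm hne)
      have h2 : ¬ (σ.1 i ≤ i) := not_le_of_gt hlt
      simp only [hle, if_true, h2, if_false, hmin]
      have := qc_add_qs (abz.2.2 (min i (σ.1 i)))
      linear_combination (Complex.normSq (v i) + Complex.normSq (v (σ.1 i))) * this
    · have h2 : σ.1 i ≤ i := le_of_not_ge hle
      simp only [hle, if_false, h2, if_true, hmin]
      have := qc_add_qs (abz.2.2 (min i (σ.1 i)))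
      linear_combination (Complex.normSq (v i) + Complex.normSq (v (σ.1 i))) * this
  have hsumv : ∑ i, Complex.normSq (v (σ.1 i)) = ∑ i, Complex.normSq (v i) :=
    Equiv.sum_comp σ.1 (fun j => Complex.normSq (v j))
  have h2 : (2:ℝ) * ∑ i, f i = 2 * ∑ i, Complex.normSq (v i) := by
    have := Finset.sum_congr rfl (fun i (_ : i ∈ Finset.univ) => hpair i)
    rw [Finset.sum_add_distrib] at this
    rw [hsum2] at this
    simp only [Finset.sum_sub_distrib, Finset.sum_add_distrib, hsumv] at this
    linarith [this]
  linarith [h2]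

/-- Pointwise formula for the squared discrepancy after one step. -/
lemma phi_cKacStep {n : ℕ} (s : CKacSeed n) (v w : Fin n → ℂ) :
    ∑ i, (Complex.normSq (cKacStep s v i) - Complex.normSq (cKacStep s w i))^2
      = ∑ i, (if i ≤ s.1.1 i then qc (s.2.2.2 (min i (s.1.1 i)))
            else qs (s.2.2.2 (min i (s.1.1 i))))^2
          * ((Complex.normSq (v i) - Complex.normSq (w i))
              + (Complex.normSq (v (s.1.1 i)) - Complex.normSq (w (s.1.1 i))))^2 := by
  refine Finset.sum_congr rfl fun i _ => ?_
  rw [normSq_cKacStep, normSq_cKacStep]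
  by_cases hle : i ≤ s.1.1 i <;> simp only [hle, if_true, if_false] <;> ring

/-- Function out of a product with a discrete finite first factor is measurable
if each slice is. -/
lemma measurable_pm_mix {n : ℕ} {X E : Type*} [MeasurableSpace X] [MeasurableSpace E]
    {g : PerfectMatching n → X → E} (hg : ∀ σ, Measurable (g σ)) :
    Measurable (fun p : PerfectMatching n × X => g p.1 p.2) := by
  intro S hS
  have : (fun p : PerfectMatching n × X => g p.1 p.2) ⁻¹' S
      = ⋃ σ : PerfectMatching n, ({σ} ×ˢ (g σ ⁻¹' S)) := by
    ext ⟨a, x⟩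
    simp only [Set.mem_preimage, Set.mem_iUnion, Set.mem_prod, Set.mem_singleton_iff]
    constructor
    · intro hx; exact ⟨a, rfl, hx⟩
    · rintro ⟨σ, rfl, hx⟩; exact hx
  rw [this]
  refine MeasurableSet.iUnion fun σ => MeasurableSet.prod ?_ (hg σ hS)
  exact trivial

lemma measurable_cKacStep {n : ℕ} :
    Measurable (fun p : CKacSeed n × (Fin n → ℂ) => cKacStep p.1 p.2) := by
  apply measurable_pi_lambda
  intro i
  -- reorganize the seed product
  have : (fun p : CKacSeed n × (Fin n → ℂ) => cKacStep p.1 p.2 i)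
      = (fun q : PerfectMatching n × (((Fin n → ℝ) × (Fin n → ℝ) × (Fin n → ℝ)) × (Fin n → ℂ)) =>
          cKacStep (q.1, q.2.1) q.2.2 i)
        ∘ (fun p => (p.1.1, (p.1.2, p.2))) := rfl
  rw [this]
  apply Measurable.comp
  · apply measurable_pm_mix (g := fun σ (q : ((Fin n → ℝ) × (Fin n → ℝ) × (Fin n → ℝ)) × (Fin n → ℂ)) => cKacStep (σ, q.1) q.2 i)
    intro σ
    simp only [cKacStep]
    by_cases hle : i ≤ σ.1 i <;> simp only [hle, if_true, if_false]
    · apply Measurable.mul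
      apply Measurable.mul
      · apply Complex.measurable_exp.comp
        apply Measurable.mul _ measurable_const
        exact Complex.measurable_ofReal.comp
          ((measurable_pi_apply _).comp (measurable_fst.comp measurable_fst))
      · apply Complex.measurable_ofReal.comp
        apply Real.continuous_cos.measurable.comp
        apply Real.continuous_arcsin.measurable.comp
        apply Real.continuous_sqrt.measurable.comp
        exact (measurable_pi_apply _).comp (measurable_snd.comp (measurable_snd.comp measurable_fst))
      · apply Complex.measurable_ofReal.comp
        apply Real.continuous_sqrt.measurable.comp
        apply Measurable.add
        · exact Complex.continuous_normSq.measurable.comp ((measurable_pi_apply _).comp measurable_snd)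
        · exact Complex.continuous_normSq.measurable.comp ((measurable_pi_apply _).comp measurable_snd)
    · apply Measurable.mul
      apply Measurable.mul
      · apply Complex.measurable_exp.comp
        apply Measurable.mul _ measurable_const
        apply Measurable.neg
        exact Complex.measurable_ofReal.comp
          ((measurable_pi_apply _).comp (measurable_fst.comp (measurable_snd.comp measurable_fst)))
      · apply Complex.measurable_ofReal.comp
        apply Real.continuous_sin.measurable.comp
        apply Real.continuous_arcsin.measurable.comp
        apply Real.continuous_sqrt.measurable.comp
        exact (measurable_pi_apply _).comp (measurable_snd.comp (measurable_snd.comp measurable_fst))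
      · apply Complex.measurable_ofReal.comp
        apply Real.continuous_sqrt.measurable.comp
        apply Measurable.add
        · exact Complex.continuous_normSq.measurable.comp ((measurable_pi_apply _).comp measurable_snd)
        · exact Complex.continuous_normSq.measurable.comp ((measurable_pi_apply _).comp measurable_snd)
  · exact ((measurable_fst.comp measurable_fst).prodMk
      ((measurable_snd.comp measurable_fst).prodMk measurable_snd))

lemma cKacWalk_succ {n ℓ : ℕ} (s : Fin (ℓ + 1) → CKacSeed n) (x0 : Fin n → ℂ) :
    cKacWalk s x0 = cKacWalk (fun j => s j.succ) (cKacStep (s 0) x0) := by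
  simp only [cKacWalk, List.ofFn_succ, List.foldl_cons]

lemma measurable_cKacWalk {n ℓ : ℕ} :
    Measurable (fun p : (Fin ℓ → CKacSeed n) × (Fin n → ℂ) => cKacWalk p.1 p.2) := by
  induction ℓ with
  | zero =>
      have : (fun p : (Fin 0 → CKacSeed n) × (Fin n → ℂ) => cKacWalk p.1 p.2)
          = fun p => p.2 := by
        funext p; simp [cKacWalk, List.ofFn_zero]
      rw [this]; exact measurable_snd
  | succ ℓ ih =>
      have : (fun p : (Fin (ℓ+1) → CKacSeed n) × (Fin n → ℂ) => cKacWalk p.1 p.2)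
          = (fun p : (Fin ℓ → CKacSeed n) × (Fin n → ℂ) => cKacWalk p.1 p.2)
            ∘ (fun p => ((fun j => p.1 j.succ),
                cKacStep (p.1 0) p.2)) := by
        funext p; exact cKacWalk_succ p.1 p.2
      rw [this]
      apply ih.comp
      apply Measurable.prodMk
      · exact measurable_pi_lambda _ fun j => (measurable_pi_apply _).comp measurable_fst
      · exact measurable_cKacStep.comp
          (Measurable.prodMk (((measurable_pi_apply 0)).comp measurable_fst) measurable_snd :
            Measurable fun p : (Fin (ℓ+1) → CKacSeed n) × (Fin n → ℂ) => (p.1 0, p.2))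

/-- Integral of a function of one coordinate against a product of probability measures. -/
lemma integral_eval_pi {ι : Type*} [Fintype ι] (μ : ι → Measure ℝ)
    [∀ i, IsProbabilityMeasure (μ i)] (i : ι) (g : ℝ → ℝ) (hg : Measurable g) :
    ∫ z : ι → ℝ, g (z i) ∂Measure.pi μ = ∫ t, g t ∂μ i := by
  classical
  have hmap : (Measure.pi μ).map (Function.eval i) = μ i := by
    apply Measure.ext
    intro s hs
    rw [Measure.map_apply (measurable_pi_apply i) hs]
    have hpre : Function.eval i ⁻¹' s = Set.pi Set.univ (Function.update (fun _ : ι => (Set.univ : Set ℝ)) i s) := by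
      ext z
      simp only [Set.mem_preimage, Set.mem_pi, Set.mem_univ, true_implies]
      constructor
      · intro hz j
        by_cases hj : j = i
        · subst hj; rw [Function.update_self]; exact hz
        · rw [Function.update_of_ne hj]; trivial
      · intro hz
        have := hz i
        rwa [Function.update_self] at this
    rw [hpre, Measure.pi_pi]
    rw [Finset.prod_eq_single i]
    · rw [Function.update_self]
    · intro j _ hj
      rw [Function.update_of_ne hj]
      simp
    · intro hi; exact absurd (Finset.mem_univ i) hi
  calc ∫ z : ι → ℝ, g (z i) ∂Measure.pi μ
      = ∫ t, g t ∂((Measure.pi μ).map (Function.eval i)) :=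
        (integral_map (measurable_pi_apply i).aemeasurable
          (hg.aestronglyMeasurable)).symm
    _ = ∫ t, g t ∂μ i := by rw [hmap]

lemma integral_qc_sq : ∫ t, (qc t)^2 ∂uniform01 = 1/3 := by
  have hcongr : ∫ t, (qc t)^2 ∂uniform01 = ∫ t in Set.Ico (0:ℝ) 1, (1 - t)^2 := by
    rw [uniform01]
    apply setIntegral_congr_fun measurableSet_Ico
    intro t ht
    have h0 : (0:ℝ) ≤ t := ht.1
    have h1 : t ≤ 1 := ht.2.le
    have hsq : Real.sqrt t ^ 2 = t := Real.sq_sqrt h0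
    simp only [qc]
    rw [Real.cos_arcsin, hsq, Real.sq_sqrt (by linarith)]
  rw [hcongr]
  rw [setIntegral_congr_set Ico_ae_eq_Ioc, ← intervalIntegral.integral_of_le zero_le_one]
  rw [intervalIntegral.integral_comp_sub_left (fun x => x^2) 1]
  norm_num [integral_pow]

lemma integral_qs_sq : ∫ t, (qs t)^2 ∂uniform01 = 1/3 := by
  have hcongr : ∫ t, (qs t)^2 ∂uniform01 = ∫ t in Set.Ico (0:ℝ) 1, t^2 := by
    rw [uniform01]
    apply setIntegral_congr_fun measurableSet_Ico
    intro t ht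
    have h0 : (0:ℝ) ≤ t := ht.1
    have h1 : t ≤ 1 := ht.2.le
    have hs : Real.sqrt t ∈ Set.Icc (-1:ℝ) 1 := by
      constructor
      · linarith [Real.sqrt_nonneg t]
      · rw [show (1:ℝ) = Real.sqrt 1 by simp]
        exact Real.sqrt_le_sqrt h1
    simp only [qs]
    rw [Real.sin_arcsin hs.1 hs.2, Real.sq_sqrt h0]
  rw [hcongr]
  rw [setIntegral_congr_set Ico_ae_eq_Ioc, ← intervalIntegral.integral_of_le zero_le_one]
  norm_num [integral_pow]

section Step

variable {n : ℕ} (h : Nonempty (PerfectMatching n)) (v w : Fin n → ℂ)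

/-- ζ-average for a fixed matching. -/
lemma integral_G {n : ℕ} (σ : PerfectMatching n) (K : Fin n → ℝ) (hK : ∀ i, 0 ≤ K i) :
    ∫ z : Fin n → ℝ,
        (∑ i, (if i ≤ σ.1 i then qc (z (min i (σ.1 i))) else qs (z (min i (σ.1 i))))^2 * K i)
        ∂(Measure.pi fun _ : Fin n => uniform01)
      = ∑ i, (1/3 : ℝ) * K i := by
  have hint : ∀ i : Fin n, Integrable (fun z : Fin n → ℝ =>
      (if i ≤ σ.1 i then qc (z (min i (σ.1 i))) else qs (z (min i (σ.1 i))))^2 * K i)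
      (Measure.pi fun _ : Fin n => uniform01) := by
    intro i
    have hmeas : Measurable (fun z : Fin n → ℝ =>
        (if i ≤ σ.1 i then qc (z (min i (σ.1 i))) else qs (z (min i (σ.1 i))))^2 * K i) := by
      by_cases hle : i ≤ σ.1 i <;> simp only [hle, if_true, if_false]
      · exact (((continuous_qc.measurable).comp (measurable_pi_apply _)).pow_const 2).mul_const _
      · exact (((continuous_qs.measurable).comp (measurable_pi_apply _)).pow_const 2).mul_const _
    refine Integrable.mono' (integrable_const (K i)) hmeas.aestronglyMeasurable
      (ae_of_all _ fun z => ?_)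
    rw [Real.norm_eq_abs, abs_of_nonneg (mul_nonneg (sq_nonneg _) (hK i))]
    by_cases hle : i ≤ σ.1 i <;> simp only [hle, if_true, if_false]
    · calc qc (z (min i (σ.1 i)))^2 * K i ≤ 1 * K i := by
            apply mul_le_mul_of_nonneg_right _ (hK i)
            nlinarith [qc_le_one (z (min i (σ.1 i))), qc_nonneg (z (min i (σ.1 i)))]
        _ = K i := one_mul _
    · calc qs (z (min i (σ.1 i)))^2 * K i ≤ 1 * K i := by
            apply mul_le_mul_of_nonneg_right _ (hK i)
            nlinarith [qs_le_one (z (min i (σ.1 i))), qs_nonneg (z (min i (σ.1 i)))]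
        _ = K i := one_mul _
  rw [integral_finset_sum _ (fun i _ => hint i)]
  refine Finset.sum_congr rfl fun i _ => ?_
  by_cases hle : i ≤ σ.1 i <;> simp only [hle, if_true, if_false]
  · rw [integral_mul_const]
    rw [integral_eval_pi (fun _ => uniform01) (min i (σ.1 i)) (fun t => (qc t)^2)
      ((continuous_qc.measurable).pow_const 2), integral_qc_sq]
  · rw [integral_mul_const]
    rw [integral_eval_pi (fun _ => uniform01) (min i (σ.1 i)) (fun t => (qs t)^2)
      ((continuous_qs.measurable).pow_const 2), integral_qs_sq]

end Step

lemma step_contraction {n : ℕ} (h : Nonempty (PerfectMatching n)) (v w : Fin n → ℂ)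
    (hvw : ∑ i, Complex.normSq (v i) = ∑ i, Complex.normSq (w i)) :
    ∫ s, ∑ i, (Complex.normSq (cKacStep s v i) - Complex.normSq (cKacStep s w i))^2
        ∂cKacSeedMeasure n h
      ≤ 2/3 * ∑ i, (Complex.normSq (v i) - Complex.normSq (w i))^2 := by
  classical
  set D : Fin n → ℝ := fun i => Complex.normSq (v i) - Complex.normSq (w i) with hD
  set K : PerfectMatching n → Fin n → ℝ := fun σ i => (D i + D (σ.1 i))^2 with hKdef
  have hK : ∀ σ i, 0 ≤ K σ i := fun σ i => sq_nonneg _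
  set G : PerfectMatching n → (Fin n → ℝ) → ℝ := fun σ z =>
    ∑ i, (if i ≤ σ.1 i then qc (z (min i (σ.1 i))) else qs (z (min i (σ.1 i))))^2 * K σ i
    with hGdef
  have hpoint : ∀ s : CKacSeed n,
      ∑ i, (Complex.normSq (cKacStep s v i) - Complex.normSq (cKacStep s w i))^2
        = G s.1 s.2.2.2 := by
    intro s
    rw [phi_cKacStep]
  -- the bound on G
  set C : ℝ := (n : ℝ) * (2 * ∑ j, |D j|)^2 with hC
  have habs : ∀ σ : PerfectMatching n, ∀ i, |D i + D (σ.1 i)| ≤ 2 * ∑ j, |D j| := by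
    intro σ i
    have h1 : |D i| ≤ ∑ j, |D j| :=
      Finset.single_le_sum (fun j _ => abs_nonneg (D j)) (Finset.mem_univ i)
    have h2 : |D (σ.1 i)| ≤ ∑ j, |D j| :=
      Finset.single_le_sum (fun j _ => abs_nonneg (D j)) (Finset.mem_univ (σ.1 i))
    calc |D i + D (σ.1 i)| ≤ |D i| + |D (σ.1 i)| := abs_add_le _ _
      _ ≤ 2 * ∑ j, |D j| := by linarith
  have hGbound : ∀ σ z, |G σ z| ≤ C := by
    intro σ z
    have h0 : 0 ≤ G σ z := Finset.sum_nonneg fun i _ =>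
      mul_nonneg (sq_nonneg _) (hK σ i)
    rw [abs_of_nonneg h0, hC]
    have : G σ z ≤ ∑ i : Fin n, (2 * ∑ j, |D j|)^2 := by
      apply Finset.sum_le_sum
      intro i _
      have hr : (if i ≤ σ.1 i then qc (z (min i (σ.1 i))) else qs (z (min i (σ.1 i))))^2 ≤ 1 := by
        by_cases hle : i ≤ σ.1 i <;> simp only [hle, if_true, if_false]
        · nlinarith [qc_le_one (z (min i (σ.1 i))), qc_nonneg (z (min i (σ.1 i)))]
        · nlinarith [qs_le_one (z (min i (σ.1 i))), qs_nonneg (z (min i (σ.1 i)))]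
      have hKb : K σ i ≤ (2 * ∑ j, |D j|)^2 := by
        rw [hKdef]
        have := habs σ i
        calc (D i + D (σ.1 i))^2 = |D i + D (σ.1 i)|^2 := (sq_abs _).symm
          _ ≤ (2 * ∑ j, |D j|)^2 := by
              apply sq_le_sq'
              · linarith [abs_nonneg (D i + D (σ.1 i))]
              · exact this
      calc (if i ≤ σ.1 i then qc (z (min i (σ.1 i))) else qs (z (min i (σ.1 i))))^2 * K σ i
          ≤ 1 * K σ i := mul_le_mul_of_nonneg_right hr (hK σ i)
        _ = K σ i := one_mul _
        _ ≤ (2 * ∑ j, |D j|)^2 := hKb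
    simpa [Finset.sum_const, nsmul_eq_mul, Finset.card_univ] using this
  -- measurability of G in z for fixed σ
  have hGmeas : ∀ σ, Measurable (G σ) := by
    intro σ
    apply Finset.measurable_sum
    intro i _
    by_cases hle : i ≤ σ.1 i <;> simp only [hle, if_true, if_false]
    · exact (((continuous_qc.measurable).comp (measurable_pi_apply _)).pow_const 2).mul_const _
    · exact (((continuous_qs.measurable).comp (measurable_pi_apply _)).pow_const 2).mul_const _
  -- full integrand
  set ν : Measure ((Fin n → ℝ) × ((Fin n → ℝ) × (Fin n → ℝ))) :=
    ((Measure.pi fun _ : Fin n => uniformAngle).prod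
      ((Measure.pi fun _ : Fin n => uniformAngle).prod
        (Measure.pi fun _ : Fin n => uniform01))) with hν
  haveI : IsProbabilityMeasure ν := by rw [hν]; infer_instance
  set F : CKacSeed n → ℝ := fun s => G s.1 s.2.2.2 with hF
  have hFmeas : Measurable F :=
    measurable_pm_mix (g := fun σ (y : (Fin n → ℝ) × ((Fin n → ℝ) × (Fin n → ℝ))) => G σ y.2.2)
      (fun σ => (hGmeas σ).comp (measurable_snd.comp measurable_snd))
  haveI : IsProbabilityMeasure (cKacSeedMeasure n h) := by
    unfold cKacSeedMeasure; infer_instance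
  have hFint : Integrable F (cKacSeedMeasure n h) :=
    Integrable.mono' (integrable_const C) hFmeas.aestronglyMeasurable
      (ae_of_all _ fun s => by rw [Real.norm_eq_abs]; exact hGbound _ _)
  have hinner : ∀ σ : PerfectMatching n, ∫ y, G σ y.2.2 ∂ν = ∑ i, (1/3:ℝ) * K σ i := by
    intro σ
    rw [hν]
    rw [integral_fun_snd (f := fun p : (Fin n → ℝ) × (Fin n → ℝ) => G σ p.2)]
    rw [integral_fun_snd (f := G σ)]
    simp only [measureReal_def, measure_univ, ENNReal.toReal_one, one_smul]
    exact integral_G σ (K σ) (hK σ)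
  have hmain : ∫ s, ∑ i, (Complex.normSq (cKacStep s v i) - Complex.normSq (cKacStep s w i))^2
        ∂cKacSeedMeasure n h
      = ∑ σ : PerfectMatching n,
          ((Fintype.card (PerfectMatching n) : ℝ))⁻¹ * ∑ i, (1/3:ℝ) * K σ i := by
    have h1 : ∫ s, ∑ i, (Complex.normSq (cKacStep s v i)
        - Complex.normSq (cKacStep s w i))^2 ∂cKacSeedMeasure n h
        = ∫ s, F s ∂cKacSeedMeasure n h := by
      apply integral_congr_ae (ae_of_all _ fun s => ?_)
      exact hpoint s
    rw [h1]
    have h2 : ∫ s, F s ∂cKacSeedMeasure n h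
        = ∫ σ, ∫ y, G σ y.2.2 ∂ν ∂uniformPM n h := by
      rw [show cKacSeedMeasure n h = (uniformPM n h).prod ν from rfl]
      exact integral_prod F hFint
    rw [h2]
    have h3 : ∫ σ, ∫ y, G σ y.2.2 ∂ν ∂uniformPM n h
        = ∫ σ, (∑ i, (1/3:ℝ) * K σ i) ∂uniformPM n h := by
      apply integral_congr_ae (ae_of_all _ fun σ => hinner σ)
    rw [h3]
    rw [integral_fintype (Integrable.of_finite)]
    refine Finset.sum_congr rfl fun σ _ => ?_
    have hsing : uniformPM n h {σ} = ((Fintype.card (PerfectMatching n) : ENNReal))⁻¹ := by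
      rw [uniformPM, PMF.toMeasure_apply_singleton _ _ (by trivial)]
      simp [PMF.uniformOfFintype_apply]
    rw [measureReal_def, hsing, smul_eq_mul]
    congr 1
    rw [ENNReal.toReal_inv]
    simp
  rw [hmain]
  -- algebra
  set S : ℝ := ∑ i, (D i)^2 with hS
  have hD0 : ∑ i, D i = 0 := by
    rw [hD]
    rw [Finset.sum_sub_distrib, hvw, sub_self]
  have hcross : ∑ σ : PerfectMatching n, ∑ i, D i * D (σ.1 i) ≤ 0 :=
    pm_sum_cross_nonpos h D hD0
  have hexpand : ∀ σ : PerfectMatching n, ∑ i, K σ i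
      = 2 * S + 2 * ∑ i, D i * D (σ.1 i) := by
    intro σ
    have h1 : ∑ i, (D (σ.1 i))^2 = ∑ i, (D i)^2 := Equiv.sum_comp σ.1 (fun j => (D j)^2)
    have h2 : ∑ i, K σ i = ∑ i, ((D i)^2 + (D (σ.1 i))^2 + 2 * (D i * D (σ.1 i))) :=
      Finset.sum_congr rfl fun i _ => by rw [hKdef]; ring
    rw [h2, Finset.sum_add_distrib, Finset.sum_add_distrib, h1, ← Finset.mul_sum, hS]
    ring
  set N : ℝ := (Fintype.card (PerfectMatching n) : ℝ) with hN
  have hNpos : 0 < N := by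
    rw [hN]
    exact_mod_cast Fintype.card_pos_iff.mpr h
  have hsum : ∑ σ : PerfectMatching n, (N⁻¹ * ∑ i, (1/3:ℝ) * K σ i)
      = (2/3) * S * (N⁻¹ * N) + (2/3) * (N⁻¹ * ∑ σ : PerfectMatching n, ∑ i, D i * D (σ.1 i)) := by
    have hterm : ∀ σ : PerfectMatching n, N⁻¹ * ∑ i, (1/3:ℝ) * K σ i
        = N⁻¹ * ((2/3) * S) + (2/3) * (N⁻¹ * ∑ i, D i * D (σ.1 i)) := by
      intro σ
      rw [← Finset.mul_sum, hexpand σ]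
      ring
    rw [Finset.sum_congr rfl fun σ _ => hterm σ, Finset.sum_add_distrib, Finset.sum_const,
      Finset.card_univ, ← Finset.mul_sum, ← Finset.mul_sum]
    rw [nsmul_eq_mul, ← hN]
    ring
  rw [hsum, inv_mul_cancel₀ hNpos.ne']
  have hS0 : 0 ≤ S := Finset.sum_nonneg fun i _ => sq_nonneg _
  have : (2/3) * (N⁻¹ * ∑ σ : PerfectMatching n, ∑ i, D i * D (σ.1 i)) ≤ 0 := by
    apply mul_nonpos_of_nonneg_of_nonpos (by norm_num)
    exact mul_nonpos_of_nonneg_of_nonpos (inv_nonneg.mpr hNpos.le) hcross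
  linarith

lemma sum_normSq_foldl {n : ℕ} (L : List (CKacSeed n)) (x0 : Fin n → ℂ) :
    ∑ i, Complex.normSq ((L.foldl (fun v seed => cKacStep seed v) x0) i)
      = ∑ i, Complex.normSq (x0 i) := by
  induction L generalizing x0 with
  | nil => rfl
  | cons a L ih =>
      rw [List.foldl_cons, ih, sum_normSq_cKacStep]

lemma sum_normSq_cKacWalk {n ℓ : ℕ} (s : Fin ℓ → CKacSeed n) (x0 : Fin n → ℂ) :
    ∑ i, Complex.normSq (cKacWalk s x0 i) = ∑ i, Complex.normSq (x0 i) :=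
  sum_normSq_foldl _ _

lemma phi_le_two {n : ℕ} (v w : Fin n → ℂ)
    (hv : ∑ i, Complex.normSq (v i) = 1) (hw : ∑ i, Complex.normSq (w i) = 1) :
    ∑ i, (Complex.normSq (v i) - Complex.normSq (w i))^2 ≤ 2 := by
  have hbound : ∀ i : Fin n, (Complex.normSq (v i) - Complex.normSq (w i))^2
      ≤ Complex.normSq (v i) + Complex.normSq (w i) := by
    intro i
    have hv0 : 0 ≤ Complex.normSq (v i) := Complex.normSq_nonneg _
    have hw0 : 0 ≤ Complex.normSq (w i) := Complex.normSq_nonneg _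
    have hv1 : Complex.normSq (v i) ≤ 1 := by
      rw [← hv]
      exact Finset.single_le_sum (fun j _ => Complex.normSq_nonneg (v j)) (Finset.mem_univ i)
    have hw1 : Complex.normSq (w i) ≤ 1 := by
      rw [← hw]
      exact Finset.single_le_sum (fun j _ => Complex.normSq_nonneg (w j)) (Finset.mem_univ i)
    nlinarith
  calc ∑ i, (Complex.normSq (v i) - Complex.normSq (w i))^2
      ≤ ∑ i, (Complex.normSq (v i) + Complex.normSq (w i)) :=
        Finset.sum_le_sum fun i _ => hbound i
    _ = 2 := by rw [Finset.sum_add_distrib, hv, hw]; norm_num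

lemma walk_contraction {n : ℕ} (h : Nonempty (PerfectMatching n)) :
    ∀ (ℓ : ℕ) (v w : Fin n → ℂ), ∑ i, Complex.normSq (v i) = 1 →
      ∑ i, Complex.normSq (w i) = 1 →
    (∫ s : Fin ℓ → CKacSeed n,
        ∑ i, (Complex.normSq (cKacWalk s v i) - Complex.normSq (cKacWalk s w i)) ^ 2
          ∂(Measure.pi fun _ => cKacSeedMeasure n h))
      ≤ (2/3 : ℝ) ^ ℓ * ∑ i, (Complex.normSq (v i) - Complex.normSq (w i))^2 := by
  haveI : IsProbabilityMeasure (cKacSeedMeasure n h) := by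
    unfold cKacSeedMeasure; infer_instance
  intro ℓ
  induction ℓ with
  | zero =>
      intro v w hv hw
      have hwalk : ∀ (s : Fin 0 → CKacSeed n) (x : Fin n → ℂ), cKacWalk s x = x := by
        intro s x
        simp [cKacWalk, List.ofFn_zero]
      simp only [hwalk, pow_zero, one_mul]
      rw [integral_const, measureReal_def, measure_univ, ENNReal.toReal_one, one_smul]
  | succ ℓ ih =>
      intro v w hv hw
      set μ1 := cKacSeedMeasure n h with hμ1
      set μrest := (Measure.pi fun _ : Fin ℓ => μ1) with hμr
      set Φ : (Fin n → ℂ) → (Fin n → ℂ) → ℝ :=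
        fun a b => ∑ i, (Complex.normSq (a i) - Complex.normSq (b i))^2 with hΦ
      set g : CKacSeed n × (Fin ℓ → CKacSeed n) → ℝ :=
        fun p => Φ (cKacWalk p.2 (cKacStep p.1 v)) (cKacWalk p.2 (cKacStep p.1 w)) with hg
      set e := MeasurableEquiv.piFinSuccAbove (fun _ : Fin (ℓ+1) => CKacSeed n) 0 with he
      have hform : ∀ s : Fin (ℓ+1) → CKacSeed n,
          Φ (cKacWalk s v) (cKacWalk s w) = g (e s) := by
        intro s
        have h1 : (e s).1 = s 0 := rfl
        have h2 : (e s).2 = fun j => s j.succ := by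
          funext j
          show s ((0 : Fin (ℓ+1)).succAbove j) = s j.succ
          rw [Fin.zero_succAbove]
        rw [hg]
        simp only [h1, h2]
        rw [cKacWalk_succ s v, cKacWalk_succ s w]
      -- measurability of g
      have hm1 : ∀ u : Fin n → ℂ,
          Measurable (fun p : CKacSeed n × (Fin ℓ → CKacSeed n) => cKacWalk p.2 (cKacStep p.1 u)) := by
        intro u
        have hpair : Measurable (fun p : CKacSeed n × (Fin ℓ → CKacSeed n) =>
            ((p.2, cKacStep p.1 u) : (Fin ℓ → CKacSeed n) × (Fin n → ℂ))) := by
          apply Measurable.prodMk measurable_snd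
          exact measurable_cKacStep.comp
            (Measurable.prodMk measurable_fst measurable_const :
              Measurable fun p : CKacSeed n × (Fin ℓ → CKacSeed n) => (p.1, u))
        exact Measurable.comp measurable_cKacWalk hpair
      have hgmeas : Measurable g := by
        rw [hg, hΦ]
        apply Finset.measurable_sum
        intro i _
        apply Measurable.pow_const
        apply Measurable.sub
        · exact Complex.continuous_normSq.measurable.comp ((measurable_pi_apply i).comp (hm1 v))
        · exact Complex.continuous_normSq.measurable.comp ((measurable_pi_apply i).comp (hm1 w))
      have hsums : ∀ (a : CKacSeed n) (r : Fin ℓ → CKacSeed n),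
          (∑ i, Complex.normSq (cKacWalk r (cKacStep a v) i) = 1)
          ∧ (∑ i, Complex.normSq (cKacWalk r (cKacStep a w) i) = 1) := by
        intro a r
        constructor
        · rw [sum_normSq_cKacWalk, sum_normSq_cKacStep, hv]
        · rw [sum_normSq_cKacWalk, sum_normSq_cKacStep, hw]
      have hgbound : ∀ p, ‖g p‖ ≤ 2 := by
        intro p
        have h0 : 0 ≤ g p := Finset.sum_nonneg fun i _ => sq_nonneg _
        rw [Real.norm_eq_abs, abs_of_nonneg h0]
        exact phi_le_two _ _ (hsums p.1 p.2).1 (hsums p.1 p.2).2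
      have hgint : Integrable g (μ1.prod μrest) :=
        Integrable.mono' (integrable_const 2) hgmeas.aestronglyMeasurable
          (ae_of_all _ hgbound)
      -- rewrite the full integral
      have hmp := MeasureTheory.measurePreserving_piFinSuccAbove
        (fun _ : Fin (ℓ+1) => μ1) 0
      have hcomp : (∫ s : Fin (ℓ+1) → CKacSeed n,
          Φ (cKacWalk s v) (cKacWalk s w) ∂(Measure.pi fun _ => μ1))
          = ∫ p, g p ∂(μ1.prod μrest) := by
        rw [show (∫ s : Fin (ℓ+1) → CKacSeed n,
            Φ (cKacWalk s v) (cKacWalk s w) ∂(Measure.pi fun _ => μ1))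
          = ∫ s : Fin (ℓ+1) → CKacSeed n, g (e s) ∂(Measure.pi fun _ => μ1) from
            integral_congr_ae (ae_of_all _ hform)]
        exact hmp.integral_comp' g
      have hiter : ∫ p, g p ∂(μ1.prod μrest) = ∫ a, ∫ r, g (a, r) ∂μrest ∂μ1 :=
        integral_prod g hgint
      -- inner bound via induction hypothesis
      have hinner : ∀ a : CKacSeed n,
          ∫ r, g (a, r) ∂μrest ≤ (2/3 : ℝ)^ℓ * Φ (cKacStep a v) (cKacStep a w) := by
        intro a
        exact ih (cKacStep a v) (cKacStep a w)
          (by rw [sum_normSq_cKacStep, hv]) (by rw [sum_normSq_cKacStep, hw])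
      -- integrability of both sides
      have hL : Integrable (fun a => ∫ r, g (a, r) ∂μrest) μ1 :=
        hgint.integral_prod_left
      have hstepmeas : Measurable (fun a : CKacSeed n => Φ (cKacStep a v) (cKacStep a w)) := by
        rw [hΦ]
        apply Finset.measurable_sum
        intro i _
        apply Measurable.pow_const
        apply Measurable.sub
        · exact Complex.continuous_normSq.measurable.comp ((measurable_pi_apply i).comp
            (measurable_cKacStep.comp (Measurable.prodMk measurable_id measurable_const :
              Measurable fun a : CKacSeed n => (a, v))))
        · exact Complex.continuous_normSq.measurable.comp ((measurable_pi_apply i).comp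
            (measurable_cKacStep.comp (Measurable.prodMk measurable_id measurable_const :
              Measurable fun a : CKacSeed n => (a, w))))
      have hR : Integrable (fun a : CKacSeed n =>
          (2/3 : ℝ)^ℓ * Φ (cKacStep a v) (cKacStep a w)) μ1 := by
        apply Integrable.mono' (integrable_const ((2/3:ℝ)^ℓ * 2))
          (hstepmeas.const_mul _).aestronglyMeasurable
        apply ae_of_all
        intro a
        have h0 : 0 ≤ Φ (cKacStep a v) (cKacStep a w) := Finset.sum_nonneg fun i _ => sq_nonneg _
        have h2 : Φ (cKacStep a v) (cKacStep a w) ≤ 2 :=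
          phi_le_two _ _ (by rw [sum_normSq_cKacStep, hv]) (by rw [sum_normSq_cKacStep, hw])
        rw [Real.norm_eq_abs, abs_of_nonneg (by positivity)]
        have : (0:ℝ) ≤ (2/3:ℝ)^ℓ := by positivity
        nlinarith
      calc (∫ s : Fin (ℓ+1) → CKacSeed n,
            Φ (cKacWalk s v) (cKacWalk s w) ∂(Measure.pi fun _ => μ1))
          = ∫ a, ∫ r, g (a, r) ∂μrest ∂μ1 := by rw [hcomp, hiter]
        _ ≤ ∫ a, (2/3 : ℝ)^ℓ * Φ (cKacStep a v) (cKacStep a w) ∂μ1 :=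
            integral_mono hL hR hinner
        _ = (2/3 : ℝ)^ℓ * ∫ a, Φ (cKacStep a v) (cKacStep a w) ∂μ1 :=
            integral_const_mul _ _
        _ ≤ (2/3 : ℝ)^ℓ * (2/3 * ∑ i, (Complex.normSq (v i) - Complex.normSq (w i))^2) := by
            apply mul_le_mul_of_nonneg_left _ (by positivity)
            exact step_contraction h v w (by rw [hv, hw])
        _ = (2/3 : ℝ)^(ℓ+1) * ∑ i, (Complex.normSq (v i) - Complex.normSq (w i))^2 := by
            ring

/-- Under the complex proportional coupling of two complex parallel Kac's
walks on the unit sphere of `ℂ^n` (`n = 2m`), with `A_ℓ[i] = |X_ℓ[i]|²`, `B_ℓ[i] = |Y_ℓ[i]|²`,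
one has `E[∑ i (A_ℓ[i] − B_ℓ[i])²] ≤ 2 (2/3)^ℓ` for any `ℓ ∈ ℕ`. -/
theorem coupledCKacWalk_contraction (n m : ℕ) (hn : n = 2 * m)
    (h : Nonempty (PerfectMatching n))
    (x0 y0 : Fin n → ℂ)
    (hx0 : ∑ i, Complex.normSq (x0 i) = 1) (hy0 : ∑ i, Complex.normSq (y0 i) = 1) (ℓ : ℕ) :
    (∫ s : Fin ℓ → CKacSeed n,
        ∑ i, (Complex.normSq (cKacWalk s x0 i) - Complex.normSq (cKacWalk s y0 i)) ^ 2
          ∂(Measure.pi fun _ => cKacSeedMeasure n h))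
      ≤ 2 * (2 / 3 : ℝ) ^ ℓ := by
    calc (∫ s : Fin ℓ → CKacSeed n,
        ∑ i, (Complex.normSq (cKacWalk s x0 i) - Complex.normSq (cKacWalk s y0 i)) ^ 2
          ∂(Measure.pi fun _ => cKacSeedMeasure n h))
      ≤ (2/3 : ℝ) ^ ℓ * ∑ i, (Complex.normSq (x0 i) - Complex.normSq (y0 i))^2 :=
        walk_contraction h ℓ x0 y0 hx0 hy0
    _ ≤ (2/3 : ℝ) ^ ℓ * 2 :=
        mul_le_mul_of_nonneg_left (phi_le_two x0 y0 hx0 hy0) (by positivity)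
    _ = 2 * (2/3 : ℝ) ^ ℓ := by ring
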